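/- arXiv:1001.0920 — 5 statements merged into one kernel-verified Lean document; each statement's English description precedes it below -/
import Mathlib

section
/- Every clustering resulting from the greedy merging process satisfies at least half of all edges: if a clustering C has the property that for all pairs of distinct clusters the majority of edges between them is negative (|Γ⁺(C₁,C₂)| ≤ |C₁||C₂|/2), and each cluster was built by merges each of which had nonnegative gain starting from singletons, then profit(C) ≥ |E|/2. -/
/-- Edge pairs of the complete graph on `Fin n`. -/
def edgePairs (n : ℕ) : Finset (Fin n × Fin n) :=
  Finset.univ.filter (fun p => p.1 < p.2)

/-- The gain of merging clusters `S` and `T`: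
`|Γ⁺(S,T)| − |Γ⁻(S,T)| = 2|Γ⁺(S,T)| − |S||T|`. -/
def gain {n : ℕ} (pos : Fin n → Fin n → Bool) (S T : Finset (Fin n)) : ℤ :=
  2 * ((S ×ˢ T).filter (fun p => pos p.1 p.2 = true)).card - S.card * T.card

/-- The all-singletons clustering. -/
def singletons (n : ℕ) : Finset (Finset (Fin n)) :=
  Finset.univ.image (fun v => {v})

/-- One greedy merge step: replace two distinct clusters with strictly positive
gain by their union. -/
def mergeStep {n : ℕ} (pos : Fin n → Fin n → Bool)
    (P Q : Finset (Finset (Fin n))) : Prop :=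
  ∃ C C', C ∈ P ∧ C' ∈ P ∧ C ≠ C' ∧ 0 < gain pos C C' ∧
    Q = insert (C ∪ C') ((P.erase C).erase C')

/-- The profit (number of agreements) of a clustering given as a set of clusters. -/
def partProfit {n : ℕ} (pos : Fin n → Fin n → Bool)
    (P : Finset (Finset (Fin n))) : ℕ :=
  ((edgePairs n).filter
    (fun p => ((∃ C ∈ P, p.1 ∈ C ∧ p.2 ∈ C) ↔ pos p.1 p.2 = true))).card


/-!
Give an ordered pair `(u, v)` with `u ≠ v` the weight `+1` if it is positive and `-1` otherwise,
and let `W(S, T)` be the total weight of `S × T`; for disjoint `S`, `T` this is `gain S T`.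
Merging `C` and `C'` adds `W(C, C') + W(C', C) = 2 gain C C' > 0` to the internal weight of the
new cluster, so along the greedy process every cluster has `W(C, C) ≥ 0`. Counting each edge in
both orientations, `2 (agreements − disagreements)` equals `∑ W(C, C) − ∑_{C ≠ D} W(C, D)`,
and in a terminal clustering both sums have the right sign.
-/

open Finset

section SignedWeight

variable {α : Type*} [DecidableEq α]

def signedWeight (pos : α → α → Bool) (u v : α) : ℤ :=
  if u = v then 0 else if pos u v then 1 else -1

def cutWeight (pos : α → α → Bool) (S T : Finset α) : ℤ :=
  ∑ u ∈ S, ∑ v ∈ T, signedWeight pos u v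

variable (pos : α → α → Bool)

lemma signedWeight_comm (hsym : ∀ u v, pos u v = pos v u) (u v : α) :
    signedWeight pos u v = signedWeight pos v u := by
  simp only [signedWeight, eq_comm (a := u), hsym u v]

lemma cutWeight_comm (hsym : ∀ u v, pos u v = pos v u) (S T : Finset α) :
    cutWeight pos S T = cutWeight pos T S := by
  rw [cutWeight, cutWeight, sum_comm]
  simp only [signedWeight_comm pos hsym]

lemma cutWeight_union_left {S S' : Finset α} (h : Disjoint S S') (T : Finset α) :
    cutWeight pos (S ∪ S') T = cutWeight pos S T + cutWeight pos S' T :=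
  sum_union h

lemma cutWeight_union_right (S : Finset α) {T T' : Finset α} (h : Disjoint T T') :
    cutWeight pos S (T ∪ T') = cutWeight pos S T + cutWeight pos S T' := by
  simp only [cutWeight, sum_union h, sum_add_distrib]

lemma cutWeight_singleton_self (v : α) : cutWeight pos {v} {v} = 0 := by
  simp [cutWeight, signedWeight]

end SignedWeight

section Agreement

variable {α : Type*} [DecidableEq α] (pos : α → α → Bool) (P : Finset (Finset α))

def agreement (u v : α) : ℤ :=
  if ∃ C ∈ P, u ∈ C ∧ v ∈ C then signedWeight pos u v else -signedWeight pos u v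

lemma agreement_comm (hsym : ∀ u v, pos u v = pos v u) (u v : α) :
    agreement pos P u v = agreement pos P v u := by
  simp only [agreement, signedWeight_comm pos hsym u v, and_comm (a := u ∈ _)]

lemma agreement_self (u : α) : agreement pos P u u = 0 := by
  simp [agreement, signedWeight]

lemma agreement_of_mem {C D : Finset α} (hdisj : (P : Set (Finset α)).PairwiseDisjoint id)
    (hC : C ∈ P) (hD : D ∈ P) {u v : α} (hu : u ∈ C) (hv : v ∈ D) :
    agreement pos P u v = if C = D then signedWeight pos u v else -signedWeight pos u v := by
  have hsame : (∃ E ∈ P, u ∈ E ∧ v ∈ E) ↔ C = D := by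
    refine ⟨fun ⟨E, hE, huE, hvE⟩ => ?_, fun h => ⟨C, hC, hu, h ▸ hv⟩⟩
    have hCE : C = E := hdisj.elim_finset hC hE u hu huE
    have hDE : D = E := hdisj.elim_finset hD hE v hv hvE
    exact hCE.trans hDE.symm
  simp only [agreement, hsame]

lemma sum_agreement_eq_sum_cutWeight [Fintype α]
    (hdisj : (P : Set (Finset α)).PairwiseDisjoint id) (hcov : ∀ v, ∃ C ∈ P, v ∈ C) :
    ∑ u, ∑ v, agreement pos P u v =
      ∑ C ∈ P, ∑ D ∈ P, if C = D then cutWeight pos C C else -cutWeight pos C D := by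
  have huniv : (univ : Finset α) = P.biUnion id := by
    ext v
    simpa using hcov v
  simp_rw [huniv, sum_biUnion hdisj, id]
  refine sum_congr rfl fun C hC => ?_
  rw [sum_comm]
  refine sum_congr rfl fun D hD => ?_
  by_cases hCD : C = D
  · subst hCD
    rw [if_pos rfl]
    exact sum_congr rfl fun u hu => sum_congr rfl fun v hv => by
      rw [agreement_of_mem pos P hdisj hC hC hu hv, if_pos rfl]
  · rw [if_neg hCD, cutWeight, ← sum_neg_distrib]
    exact sum_congr rfl fun u hu => by
      rw [← sum_neg_distrib]
      exact sum_congr rfl fun v hv => by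
        rw [agreement_of_mem pos P hdisj hC hD hu hv, if_neg hCD]

end Agreement

lemma sum_sum_eq_two_nsmul_sum_lt {α M : Type*} [Fintype α] [LinearOrder α]
    [AddCommMonoid M] {f : α → α → M} (hf : ∀ u v, f u v = f v u) (hdiag : ∀ u, f u u = 0) :
    ∑ u, ∑ v, f u v = 2 • ∑ p ∈ univ.filter (fun p : α × α => p.1 < p.2), f p.1 p.2 := by
  set g : α × α → M := fun p => if p.1 < p.2 then f p.1 p.2 else 0
  have hsplit : ∀ p : α × α, f p.1 p.2 = g p + g p.swap := by
    rintro ⟨u, v⟩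
    rcases lt_trichotomy u v with h | rfl | h
    · simp [g, h, h.not_gt]
    · simp [g, hdiag]
    · simp [g, h, h.not_gt, hf u v]
  have hswap : ∑ p : α × α, g p.swap = ∑ p, g p := (Equiv.prodComm α α).sum_comp g
  calc ∑ u, ∑ v, f u v = ∑ p : α × α, f p.1 p.2 := (Fintype.sum_prod_type' f).symm
    _ = ∑ p, g p + ∑ p : α × α, g p.swap := by simp only [hsplit, sum_add_distrib]
    _ = 2 • ∑ p, g p := by rw [hswap, two_nsmul]
    _ = _ := by rw [sum_filter]

section GreedyClustering

variable {n : ℕ} (pos : Fin n → Fin n → Bool)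

lemma gain_eq_cutWeight {S T : Finset (Fin n)} (h : Disjoint S T) :
    gain pos S T = cutWeight pos S T := by
  have hne : ∀ u ∈ S, ∀ v ∈ T, u ≠ v := fun u hu v hv huv =>
    disjoint_left.mp h hu (huv ▸ hv)
  have hw : cutWeight pos S T = ∑ p ∈ S ×ˢ T, (2 * (if pos p.1 p.2 then 1 else 0) - 1) := by
    rw [cutWeight, sum_product]
    refine sum_congr rfl fun u hu => sum_congr rfl fun v hv => ?_
    cases hp : pos u v <;> simp [signedWeight, hne u hu v hv, hp]
  rw [hw, sum_sub_distrib, ← mul_sum, sum_boole, gain]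
  simp

structure IsCohesiveClustering (P : Finset (Finset (Fin n))) : Prop where
  pairwiseDisjoint : (P : Set (Finset (Fin n))).PairwiseDisjoint id
  exists_mem : ∀ v, ∃ C ∈ P, v ∈ C
  cutWeight_self_nonneg : ∀ C ∈ P, 0 ≤ cutWeight pos C C

lemma isCohesiveClustering_singletons : IsCohesiveClustering pos (singletons n) where
  pairwiseDisjoint := by
    rintro _ hC _ hD hCD
    obtain ⟨v, -, rfl⟩ := mem_image.mp (mem_coe.mp hC)
    obtain ⟨w, -, rfl⟩ := mem_image.mp (mem_coe.mp hD)
    exact disjoint_singleton.mpr fun h => hCD (h ▸ rfl)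
  exists_mem v := ⟨{v}, by simp [singletons], mem_singleton_self v⟩
  cutWeight_self_nonneg C hC := by
    obtain ⟨v, -, rfl⟩ := mem_image.mp hC
    rw [cutWeight_singleton_self]

lemma IsCohesiveClustering.of_mergeStep (hsym : ∀ u v, pos u v = pos v u)
    {P Q : Finset (Finset (Fin n))} (hP : IsCohesiveClustering pos P) (h : mergeStep pos P Q) :
    IsCohesiveClustering pos Q := by
  obtain ⟨C, C', hC, hC', hne, hgain, rfl⟩ := h
  have hCC' : Disjoint C C' := hP.pairwiseDisjoint hC hC' hne
  have mem_rest {D} : D ∈ (P.erase C).erase C' ↔ D ≠ C' ∧ D ≠ C ∧ D ∈ P := by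
    simp only [mem_erase]
  refine ⟨?_, fun v => ?_, fun D hD => ?_⟩
  · rw [coe_insert]
    refine (hP.pairwiseDisjoint.subset fun D hD => (mem_rest.mp hD).2.2).insert
      fun D hD _ => ?_
    obtain ⟨hDC', hDC, hD⟩ := mem_rest.mp hD
    exact disjoint_union_left.mpr
      ⟨hP.pairwiseDisjoint hC hD (Ne.symm hDC), hP.pairwiseDisjoint hC' hD (Ne.symm hDC')⟩
  · obtain ⟨D, hD, hvD⟩ := hP.exists_mem v
    by_cases hDC : D = C ∨ D = C'
    · refine ⟨C ∪ C', mem_insert_self _ _, ?_⟩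
      rcases hDC with rfl | rfl <;> simp [hvD]
    · push Not at hDC
      exact ⟨D, mem_insert_of_mem (mem_rest.mpr ⟨hDC.2, hDC.1, hD⟩), hvD⟩
  · rcases mem_insert.mp hD with rfl | hD
    · rw [cutWeight_union_left pos hCC', cutWeight_union_right pos _ hCC',
        cutWeight_union_right pos _ hCC', cutWeight_comm pos hsym C' C,
        ← gain_eq_cutWeight pos hCC']
      linarith [hP.cutWeight_self_nonneg C hC, hP.cutWeight_self_nonneg C' hC']
    · exact hP.cutWeight_self_nonneg D (mem_rest.mp hD).2.2

lemma IsCohesiveClustering.of_reflTransGen (hsym : ∀ u v, pos u v = pos v u)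
    {P : Finset (Finset (Fin n))} (h : Relation.ReflTransGen (mergeStep pos) (singletons n) P) :
    IsCohesiveClustering pos P := by
  induction h with
  | refl => exact isCohesiveClustering_singletons pos
  | tail _ hstep ih => exact ih.of_mergeStep pos hsym hstep

lemma two_mul_partProfit_sub_card (P : Finset (Finset (Fin n))) :
    2 * (partProfit pos P : ℤ) - (edgePairs n).card =
      ∑ p ∈ edgePairs n, agreement pos P p.1 p.2 := by
  set agrees : Fin n × Fin n → Prop :=
    fun p => (∃ C ∈ P, p.1 ∈ C ∧ p.2 ∈ C) ↔ pos p.1 p.2 = true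
  have hagree : ∀ p ∈ edgePairs n,
      agreement pos P p.1 p.2 = if agrees p then 1 else -1 := by
    intro p hp
    have hne : p.1 ≠ p.2 := (mem_filter.mp hp).2.ne
    by_cases hs : ∃ C ∈ P, p.1 ∈ C ∧ p.2 ∈ C <;> by_cases hq : pos p.1 p.2 <;>
      simp [agrees, agreement, signedWeight, hne, hs, hq]
  have hcard := card_filter_add_card_filter_not (s := edgePairs n) (p := agrees)
  rw [sum_congr rfl hagree, sum_ite, sum_const, sum_const, partProfit]
  push_cast [← hcard]
  simp only [smul_neg, nsmul_eq_mul, mul_one]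
  ring

end GreedyClustering

/-- a greedy-terminal clustering (reachable from singletons by
positive-gain merges and with no remaining positive-gain merge) satisfies at
least half of all edges. -/
theorem greedy_terminal_profit_ge_half {n : ℕ}
    (pos : Fin n → Fin n → Bool) (_hsym : ∀ u v, pos u v = pos v u)
    (P : Finset (Finset (Fin n)))
    (hreach : Relation.ReflTransGen (mergeStep pos) (singletons n) P)
    (hterm : ∀ C ∈ P, ∀ C' ∈ P, C ≠ C' → gain pos C C' ≤ 0) :
    (edgePairs n).card ≤ 2 * partProfit pos P := by
  have hP := IsCohesiveClustering.of_reflTransGen pos _hsym hreach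
  have hnonneg : 0 ≤ ∑ u, ∑ v, agreement pos P u v := by
    rw [sum_agreement_eq_sum_cutWeight pos P hP.pairwiseDisjoint hP.exists_mem]
    refine sum_nonneg fun C hC => sum_nonneg fun D hD => ?_
    split_ifs with hCD
    · exact hP.cutWeight_self_nonneg C hC
    · have hdisj : Disjoint C D := hP.pairwiseDisjoint hC hD hCD
      rw [← gain_eq_cutWeight pos hdisj]
      linarith [hterm C hC D hD hCD]
  rw [sum_sum_eq_two_nsmul_sum_lt (agreement_comm pos P _hsym) (agreement_self pos P)] at hnonneg
  change 0 ≤ 2 • ∑ p ∈ edgePairs n, agreement pos P p.1 p.2 at hnonneg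
  rw [← two_mul_partProfit_sub_card, two_nsmul] at hnonneg
  omega
end

section
/- For any 0 < c < 1 and any clustering C of n vertices, let C' be the clustering obtained from C by splitting into singletons all clusters of C of size less than c·n. Then cost(C') ≤ cost(C) + c·n²/2. -/
/-- The cost (number of disagreements) of the clustering given by `f`. -/
def clCost {n : ℕ} (pos : Fin n → Fin n → Bool) (f : Fin n → ℕ) : ℕ :=
  ((edgePairs n).filter (fun p => ¬ (f p.1 = f p.2 ↔ pos p.1 p.2 = true))).card

/-!
Every disagreement of `C'` is a disagreement of `C` or a pair on which `C` and `C'` differ, and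
these are the pairs inside a cluster of size `< c·n`. Each vertex has fewer than `c·n` partners
in such a pair, so there are at most `c·n·n` ordered pairs and `c·n²/2` unordered ones.
-/

open Finset

section Counting

variable {α β : Type*} [Fintype α] [DecidableEq β]

theorem two_mul_card_filter_lt_le [LinearOrder α] (r : α → α → Prop) [DecidableRel r]
    (hr : ∀ u v, r u v → r v u) :
    2 * #{p : α × α | p.1 < p.2 ∧ r p.1 p.2} ≤ #{p : α × α | r p.1 p.2} := by
  set A : Finset (α × α) := {p | p.1 < p.2 ∧ r p.1 p.2}
  have hdisj : Disjoint A (A.image Prod.swap) := by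
    simp only [A, disjoint_left, mem_image, mem_filter, mem_univ, true_and]
    rintro p ⟨hlt, -⟩ ⟨q, ⟨hq, -⟩, rfl⟩
    exact lt_asymm hlt hq
  have hsub : A ∪ A.image Prod.swap ⊆ ({p : α × α | r p.1 p.2} : Finset _) := by
    intro p
    simp only [A, mem_union, mem_image, mem_filter, mem_univ, true_and]
    rintro (⟨-, hp⟩ | ⟨q, ⟨-, hq⟩, rfl⟩)
    exacts [hp, hr _ _ hq]
  calc 2 * #A = #(A ∪ A.image Prod.swap) := by
        rw [card_union_of_disjoint hdisj, card_image_of_injective _ Prod.swap_injective]; ring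
    _ ≤ _ := card_le_card hsub

theorem card_filter_le_card_mul {r : α → α → Prop} [DecidableRel r] {t : ℝ}
    (hr : ∀ u, (#{v | r u v} : ℝ) ≤ t) :
    (#{p : α × α | r p.1 p.2} : ℝ) ≤ Fintype.card α * t := by
  have hsum : #{p : α × α | r p.1 p.2} = ∑ u, #{v | r u v} := by
    simp only [card_filter, Fintype.sum_prod_type]
  rw [hsum, Nat.cast_sum, ← nsmul_eq_mul, ← card_univ, ← sum_const]
  exact sum_le_sum fun u _ => hr u

def clusterSize (f : α → β) (u : α) : ℕ := #{w | f w = f u}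

theorem clusterSize_congr {f : α → β} {u v : α} (h : f u = f v) :
    clusterSize f u = clusterSize f v := by
  simp only [clusterSize, h]

theorem card_pairs_in_small_clusters_le (f : α → β) {t : ℝ}
    (ht : 0 ≤ t) :
    (#{p : α × α | f p.1 = f p.2 ∧ (clusterSize f p.1 : ℝ) < t} : ℝ) ≤ Fintype.card α * t := by
  refine card_filter_le_card_mul (r := fun u v => f u = f v ∧ (clusterSize f u : ℝ) < t)
    fun u => ?_
  by_cases hu : (clusterSize f u : ℝ) < t
  · have hsub : ({v | f u = f v ∧ (clusterSize f u : ℝ) < t} : Finset α) ⊆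
        ({w | f w = f u} : Finset α) :=
      fun v hv => mem_filter.2 ⟨mem_univ v, (mem_filter.1 hv).2.1.symm⟩
    exact le_trans (by exact_mod_cast card_le_card hsub) hu.le
  · simp [hu, ht]

theorem two_mul_card_lt_pairs_in_small_clusters_le [LinearOrder α]
    (f : α → β) {t : ℝ} (ht : 0 ≤ t) :
    (2 * #{p : α × α | p.1 < p.2 ∧ f p.1 = f p.2 ∧ (clusterSize f p.1 : ℝ) < t} : ℝ) ≤
      Fintype.card α * t := by
  have hsymm : ∀ u v, (f u = f v ∧ (clusterSize f u : ℝ) < t) →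
      f v = f u ∧ (clusterSize f v : ℝ) < t :=
    fun u v ⟨huv, hu⟩ => ⟨huv.symm, by rwa [← clusterSize_congr huv]⟩
  calc _ ≤ (#{p : α × α | f p.1 = f p.2 ∧ (clusterSize f p.1 : ℝ) < t} : ℝ) := by
        exact_mod_cast two_mul_card_filter_lt_le _ hsymm
    _ ≤ _ := card_pairs_in_small_clusters_le f ht

end Counting

theorem clCost_le_clCost_add {n : ℕ} (pos : Fin n → Fin n → Bool) (f g : Fin n → ℕ) :
    clCost pos g ≤ clCost pos f + #{p ∈ edgePairs n | ¬ (f p.1 = f p.2 ↔ g p.1 = g p.2)} := by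
  refine le_trans (card_le_card ?_) (card_union_le _ _)
  intro p
  simp only [mem_union, mem_filter]
  tauto

theorem filter_edgePairs_splitting_differs_subset {n : ℕ} {c : ℝ} {f g : Fin n → ℕ}
    (hg : ∀ u v, g u = g v ↔ (f u = f v ∧ c * n ≤ clusterSize f u) ∨ u = v) :
    {p ∈ edgePairs n | ¬ (f p.1 = f p.2 ↔ g p.1 = g p.2)} ⊆
      ({p : Fin n × Fin n | p.1 < p.2 ∧ f p.1 = f p.2 ∧ (clusterSize f p.1 : ℝ) < c * n} :
        Finset _) := by
  intro p hp
  obtain ⟨hlt, hp⟩ := (mem_filter.1 hp).imp (fun h => (mem_filter.1 h).2) id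
  refine mem_filter.2 ⟨mem_univ p, hlt, ?_⟩
  simp only [hg, hlt.ne, or_false] at hp
  simp only [← not_le]
  tauto

theorem cost_of_splitting_general {n : ℕ}
    (pos : Fin n → Fin n → Bool)
    (c : ℝ) (hc0 : 0 < c)
    (f g : Fin n → ℕ)
    (hg : ∀ u v : Fin n, g u = g v ↔
      ((f u = f v ∧ c * n ≤ ((Finset.univ.filter (fun w => f w = f u)).card : ℝ))
        ∨ u = v)) :
    (clCost pos g : ℝ) ≤ clCost pos f + c * n ^ 2 / 2 := by
  have hsmall := two_mul_card_lt_pairs_in_small_clusters_le f (t := c * n) (by positivity)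
  rw [Fintype.card_fin] at hsmall
  calc (clCost pos g : ℝ)
      ≤ clCost pos f + #{p ∈ edgePairs n | ¬ (f p.1 = f p.2 ↔ g p.1 = g p.2)} := by
        exact_mod_cast clCost_le_clCost_add pos f g
    _ ≤ clCost pos f +
          #{p : Fin n × Fin n | p.1 < p.2 ∧ f p.1 = f p.2 ∧ (clusterSize f p.1 : ℝ) < c * n} := by
        gcongr
        exact filter_edgePairs_splitting_differs_subset hg
    _ ≤ clCost pos f + c * n ^ 2 / 2 := by linarith

/-- Lemma 14 of Bansal et al.: if `C'` is obtained from `C` by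
splitting into singletons every cluster of size less than `c·n`, then
`cost(C') ≤ cost(C) + c·n²/2`. -/
theorem cost_of_splitting {n : ℕ}
    (pos : Fin n → Fin n → Bool) (_hsym : ∀ u v, pos u v = pos v u)
    (c : ℝ) (hc0 : 0 < c) (hc1 : c < 1)
    (f g : Fin n → ℕ)
    (hg : ∀ u v : Fin n, g u = g v ↔
      ((f u = f v ∧ c * n ≤ ((Finset.univ.filter (fun w => f w = f u)).card : ℝ))
        ∨ u = v)) :
    (clCost pos g : ℝ) ≤ clCost pos f + c * n ^ 2 / 2 :=
  cost_of_splitting_general pos c hc0 f g hg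
end

section
/- Let W = {W₁,…,W_K} and W' = {W'₁,…,W'_K} be two clusterings of the same n vertices indexed so that W'_i corresponds to W_i (an injection from clusters of W' to clusters of W). Then cost(W') − cost(W) ≤ n · Σᵢ |W'ᵢ \ Wᵢ|. -/
/-- Cost (number of disagreements) of a clustering given as an indexed family of
clusters: negative edges inside clusters plus positive edges between clusters. -/
def famCost {n : ℕ} {ι : Type*} [Fintype ι] [DecidableEq ι]
    (pos : Fin n → Fin n → Bool) (W : ι → Finset (Fin n)) : ℕ :=
  ((edgePairs n).filter
    (fun p => ¬ ((∃ i, p.1 ∈ W i ∧ p.2 ∈ W i) ↔ pos p.1 p.2 = true))).card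

/-!
Call a vertex *moved* if it lies in `W' i \ W i` for some `i`. For two unmoved vertices
`u, v` the relation "same cluster" is the same in `W` and in `W'`: if `u` lies in `W' i`
then, being unmoved, it lies in `W i`, which is its unique cluster in `W`. Hence every pair
that is a disagreement for `W'` but not for `W` contains a moved vertex, and there are at
most `n` pairs through each moved vertex.
-/

open Finset

def SameCluster {α ι : Type*} (W : ι → Finset α) (u v : α) : Prop :=
  ∃ i, u ∈ W i ∧ v ∈ W i

section MovedVertices

variable {α ι : Type*} [Fintype ι] [DecidableEq α]

def movedVertices (W W' : ι → Finset α) : Finset α :=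
  univ.biUnion fun i => W' i \ W i

theorem mem_movedVertices {W W' : ι → Finset α} {v : α} :
    v ∈ movedVertices W W' ↔ ∃ i, v ∈ W' i ∧ v ∉ W i := by
  simp [movedVertices]

theorem card_movedVertices_le (W W' : ι → Finset α) :
    #(movedVertices W W') ≤ ∑ i, #(W' i \ W i) :=
  card_biUnion_le

theorem sameCluster_iff_of_notMem_movedVertices {W W' : ι → Finset α}
    (hW : ∀ v, ∀ i j, v ∈ W i → v ∈ W j → i = j) (hW' : ∀ v, ∃ i, v ∈ W' i)
    {u v : α} (hu : u ∉ movedVertices W W') (hv : v ∉ movedVertices W W') :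
    SameCluster W' u v ↔ SameCluster W u v := by
  simp only [mem_movedVertices, not_exists, not_and, not_not] at hu hv
  constructor
  · rintro ⟨i, hui, hvi⟩
    exact ⟨i, hu i hui, hv i hvi⟩
  · rintro ⟨j, huj, hvj⟩
    obtain ⟨i, hui⟩ := hW' u
    obtain ⟨k, hvk⟩ := hW' v
    obtain rfl := hW u i j (hu i hui) huj
    obtain rfl := hW v k i (hv k hvk) hvj
    exact ⟨k, hui, hvk⟩

end MovedVertices

theorem card_edgePairs_filter_touching_le {n : ℕ} (D : Finset (Fin n)) :
    #((edgePairs n).filter fun p => p.1 ∈ D ∨ p.2 ∈ D) ≤ #D * n := by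
  let sort : Fin n × Fin n → Fin n × Fin n := fun q => (min q.1 q.2, max q.1 q.2)
  calc #((edgePairs n).filter fun p => p.1 ∈ D ∨ p.2 ∈ D)
      ≤ #((D ×ˢ univ).image sort) := by
        refine card_le_card fun p hp => ?_
        simp only [edgePairs, mem_filter, mem_univ, true_and] at hp
        obtain ⟨hlt, hp1 | hp2⟩ := hp
        · exact mem_image.2 ⟨p, by simpa using hp1, by simp [sort, hlt.le]⟩
        · exact mem_image.2 ⟨(p.2, p.1), by simpa using hp2, by simp [sort, hlt.le]⟩
    _ ≤ #(D ×ˢ (univ : Finset (Fin n))) := card_image_le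
    _ = #D * n := by simp

theorem famCost_le_add_card_touching {n : ℕ} {ι : Type*} [Fintype ι] [DecidableEq ι]
    (pos : Fin n → Fin n → Bool) {W W' : ι → Finset (Fin n)} {D : Finset (Fin n)}
    (hD : ∀ u v, u ∉ D → v ∉ D → (SameCluster W' u v ↔ SameCluster W u v)) :
    famCost pos W' ≤ famCost pos W + #((edgePairs n).filter fun p => p.1 ∈ D ∨ p.2 ∈ D) := by
  refine (card_le_card fun p hp => ?_).trans (card_union_le _ _)
  simp only [mem_filter, mem_union] at hp ⊢
  by_cases hpD : p.1 ∈ D ∨ p.2 ∈ D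
  · exact Or.inr ⟨hp.1, hpD⟩
  · rw [not_or] at hpD
    exact Or.inl ⟨hp.1, fun h => hp.2 ((hD _ _ hpD.1 hpD.2).trans h)⟩

theorem cost_diff_le_n_mul_sum_general {n : ℕ} {ι : Type*} [Fintype ι] [DecidableEq ι]
    (pos : Fin n → Fin n → Bool)
    (W W' : ι → Finset (Fin n))
    (hW : ∀ v : Fin n, ∃! i, v ∈ W i)
    (hW' : ∀ v : Fin n, ∃! i, v ∈ W' i) :
    (famCost pos W' : ℤ) - famCost pos W ≤ n * ∑ i, ((W' i \ W i).card : ℤ) := by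
  have hsame : ∀ u v, u ∉ movedVertices W W' → v ∉ movedVertices W W' →
      (SameCluster W' u v ↔ SameCluster W u v) := fun _ _ =>
    sameCluster_iff_of_notMem_movedVertices (fun v _ _ => (hW v).unique)
      (fun v => (hW' v).exists)
  have hle : famCost pos W' ≤ famCost pos W + n * ∑ i, #(W' i \ W i) :=
    calc famCost pos W' ≤ famCost pos W + #(movedVertices W W') * n :=
          (famCost_le_add_card_touching pos hsame).trans
            (Nat.add_le_add_left (card_edgePairs_filter_touching_le _) _)
      _ ≤ famCost pos W + n * ∑ i, #(W' i \ W i) := by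
          rw [mul_comm]; gcongr; exact card_movedVertices_le W W'
  rw [sub_le_iff_le_add']
  exact_mod_cast hle

/-- if `W` and `W'` are two clusterings of the same `n` vertices,
indexed so that `W' i` corresponds to `W i`, then
`cost(W') − cost(W) ≤ n · Σᵢ |W'ᵢ \ Wᵢ|`. -/
theorem cost_diff_le_n_mul_sum {n : ℕ} {ι : Type*} [Fintype ι] [DecidableEq ι]
    (pos : Fin n → Fin n → Bool) (_hsym : ∀ u v, pos u v = pos v u)
    (W W' : ι → Finset (Fin n))
    (hW : ∀ v : Fin n, ∃! i, v ∈ W i)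
    (hW' : ∀ v : Fin n, ∃! i, v ∈ W' i) :
    (famCost pos W' : ℤ) - famCost pos W ≤ n * ∑ i, ((W' i \ W i).card : ℤ) :=
  cost_diff_le_n_mul_sum_general pos W W' hW hW'
end

section
/- Let C be a cluster produced by the greedy algorithm (so C was assembled by positive-gain merges from singletons) and let W₁,…,W_K be the clusters of any clustering W. Then |C| ≤ maxᵢ |C ∩ Wᵢ| + 2·|Γ⁺(C∩W₁, …, C∩W_K)|, where Γ⁺(S₁,…,S_m) denotes the set of positive edges with endpoints in two different sets Sᵢ, Sⱼ. -/
/-- A cluster is greedy-built if it arises from singletons by merging disjoint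
clusters, each time with strictly positive gain. -/
inductive GreedyBuilt {n : ℕ} (pos : Fin n → Fin n → Bool) : Finset (Fin n) → Prop
  | single (v : Fin n) : GreedyBuilt pos {v}
  | merge (S T : Finset (Fin n)) : GreedyBuilt pos S → GreedyBuilt pos T →
      Disjoint S T → 0 < gain pos S T → GreedyBuilt pos (S ∪ T)

/-!
Induction along the greedy construction, with `Γ⁺` counted by ordered pairs (each edge twice).
When `S` and `T` merge, write `sᵢ = |S ∩ Wᵢ|`, `tᵢ = |T ∩ Wᵢ|`. A positive gain says that more
than half of the `(Σ sᵢ)(Σ tᵢ)` pairs of `S × T` are positive; at most `Σ sᵢ tᵢ` of them stay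
inside a part, so `(Σ sᵢ)(Σ tᵢ) - 2 Σ sᵢ tᵢ` is less than twice the number of new cross edges.
This quantity dominates the loss `max s + max t - max (s + t)`: if `i₀` maximises `s` and `j₀`
maximises `t`, then it is at least `(s i₀ - s j₀)(t j₀ - t i₀)`, and both factors are at least
the loss.
-/

open Finset

section Arithmetic

variable {ι : Type*} [Fintype ι]

lemma sub_mul_sub_le_sum_mul_sum_sub_two_mul {s t : ι → ℕ} {i₀ j₀ : ι} (hne : i₀ ≠ j₀)
    (ht : ∀ i, t i ≤ t j₀) :
    ((s i₀ : ℤ) - s j₀) * ((t j₀ : ℤ) - t i₀) ≤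
      (∑ i, (s i : ℤ)) * (∑ i, (t i : ℤ)) - 2 * ∑ i, (s i : ℤ) * t i := by
  classical
  set B := ∑ i, (t i : ℤ)
  have hB : ∀ i ≠ j₀, (t i : ℤ) + t j₀ ≤ B := fun i hi => by
    rw [← sum_pair (f := fun i => (t i : ℤ)) hi]
    exact sum_le_sum_of_subset_of_nonneg (subset_univ _) fun _ _ _ => by positivity
  -- termwise lower bound for `s i * (B - 2 * t i)`; only the `j₀` term can be negative
  set g : ι → ℤ := fun i => if i = j₀ then s j₀ * ((t i₀ : ℤ) - t j₀) else s i * ((t j₀ : ℤ) - t i)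
  have ht' : ∀ i, (t i : ℤ) ≤ t j₀ := fun i => by exact_mod_cast ht i
  calc ((s i₀ : ℤ) - s j₀) * ((t j₀ : ℤ) - t i₀) = ∑ i ∈ {i₀, j₀}, g i := by
        rw [sum_pair hne]; simp only [g, if_neg hne, if_pos rfl]; ring
    _ ≤ ∑ i, g i := sum_le_sum_of_subset_of_nonneg (subset_univ _) fun i _ hi => by
        have hij : i ≠ j₀ := fun h => hi (by simp [h])
        simp only [g, if_neg hij]
        exact mul_nonneg (by positivity) (sub_nonneg.mpr (ht' i))
    _ ≤ ∑ i, (s i : ℤ) * (B - 2 * t i) := sum_le_sum fun i _ => by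
        simp only [g]
        split_ifs with hi
        · subst hi
          exact mul_le_mul_of_nonneg_left (by linarith [hB i₀ hne]) (by positivity)
        · exact mul_le_mul_of_nonneg_left (by linarith [hB i hi]) (by positivity)
    _ = (∑ i, (s i : ℤ)) * B - 2 * ∑ i, (s i : ℤ) * t i := by
        rw [sum_mul, mul_sum, ← sum_sub_distrib]
        exact sum_congr rfl fun i _ => by ring

lemma sup_add_sup_le_of_sum_mul_sum_le {s t : ι → ℕ} {D : ℕ}
    (h : (∑ i, s i) * (∑ i, t i) ≤ 2 * (D + ∑ i, s i * t i)) :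
    univ.sup s + univ.sup t ≤ univ.sup (fun i => s i + t i) + 2 * D := by
  set m := univ.sup (fun i => s i + t i)
  by_cases hm : univ.sup s + univ.sup t ≤ m
  · omega
  have hι : (univ : Finset ι).Nonempty := by
    by_contra h; simp_all [not_nonempty_iff_eq_empty]
  obtain ⟨i₀, -, hi₀⟩ := exists_mem_eq_sup univ hι s
  obtain ⟨j₀, -, hj₀⟩ := exists_mem_eq_sup univ hι t
  have hm₀ : s i₀ + t i₀ ≤ m := le_sup (f := fun i => s i + t i) (mem_univ i₀)
  have hm₁ : s j₀ + t j₀ ≤ m := le_sup (f := fun i => s i + t i) (mem_univ j₀)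
  have hne : i₀ ≠ j₀ := by rintro rfl; omega
  have hprod := sub_mul_sub_le_sum_mul_sum_sub_two_mul (s := s) hne
    fun i => hj₀ ▸ le_sup (f := t) (mem_univ i)
  have hZ : ((∑ i, s i : ℕ) : ℤ) * (∑ i, t i : ℕ) ≤ 2 * (D + (∑ i, s i * t i : ℕ)) := by
    exact_mod_cast h
  push_cast at hZ
  have hs : (1 : ℤ) ≤ (s i₀ : ℤ) - s j₀ := by omega
  have ht : (univ.sup s + univ.sup t : ℤ) - m ≤ (t j₀ : ℤ) - t i₀ := by omega
  zify
  linarith [le_mul_of_one_le_left (by omega : (0 : ℤ) ≤ (t j₀ : ℤ) - t i₀) hs]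

end Arithmetic

section CrossPairs

variable {α ι : Type*} [DecidableEq α] [Fintype ι]

/-- On `A × A` every edge of `Γ⁺(A ∩ W₁, …, A ∩ W_K)` is counted twice, once per orientation. -/
def crossPairs (pos : α → α → Bool) (W : ι → Finset α) (S T : Finset α) : Finset (α × α) :=
  (S ×ˢ T).filter fun p => pos p.1 p.2 = true ∧ ¬∃ i, p.1 ∈ W i ∧ p.2 ∈ W i

variable (pos : α → α → Bool) (W : ι → Finset α)

lemma card_crossPairs_union_left {S T : Finset α} (U : Finset α) (h : Disjoint S T) :
    (crossPairs pos W (S ∪ T) U).card =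
      (crossPairs pos W S U).card + (crossPairs pos W T U).card := by
  rw [crossPairs, union_product, filter_union,
    card_union_of_disjoint (disjoint_filter_filter (disjoint_product.mpr (Or.inl h)))]
  rfl

lemma card_crossPairs_union_right (S : Finset α) {T U : Finset α} (h : Disjoint T U) :
    (crossPairs pos W S (T ∪ U)).card =
      (crossPairs pos W S T).card + (crossPairs pos W S U).card := by
  rw [crossPairs, product_union, filter_union,
    card_union_of_disjoint (disjoint_filter_filter (disjoint_product.mpr (Or.inr h)))]
  rfl

variable {pos W} in
lemma swap_mem_crossPairs (hsym : ∀ u v, pos u v = pos v u) {S T : Finset α} {p : α × α}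
    (hp : p ∈ crossPairs pos W S T) : p.swap ∈ crossPairs pos W T S := by
  simp only [crossPairs, mem_filter, mem_product, Prod.fst_swap, Prod.snd_swap] at hp ⊢
  exact ⟨hp.1.symm, hsym p.2 p.1 ▸ hp.2.1, fun ⟨i, h₁, h₂⟩ => hp.2.2 ⟨i, h₂, h₁⟩⟩

variable {pos} in
lemma card_crossPairs_comm (hsym : ∀ u v, pos u v = pos v u) (S T : Finset α) :
    (crossPairs pos W S T).card = (crossPairs pos W T S).card :=
  card_nbij' Prod.swap Prod.swap (fun _ hp => swap_mem_crossPairs hsym hp)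
    (fun _ hp => swap_mem_crossPairs hsym hp) (fun _ _ => rfl) (fun _ _ => rfl)

lemma card_filter_pos_le (S T : Finset α) :
    ((S ×ˢ T).filter fun p => pos p.1 p.2 = true).card ≤
      (crossPairs pos W S T).card + ∑ i, (S ∩ W i).card * (T ∩ W i).card := by
  calc _ ≤ (crossPairs pos W S T ∪ univ.biUnion fun i => (S ∩ W i) ×ˢ (T ∩ W i)).card := by
        refine card_le_card fun p hp => ?_
        simp only [crossPairs, mem_union, mem_filter, mem_biUnion, mem_univ, true_and,
          mem_product, mem_inter] at hp ⊢
        by_cases hsame : ∃ i, p.1 ∈ W i ∧ p.2 ∈ W i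
        · obtain ⟨i, h₁, h₂⟩ := hsame
          exact Or.inr ⟨i, ⟨hp.1.1, h₁⟩, hp.1.2, h₂⟩
        · exact Or.inl ⟨hp.1, hp.2, hsame⟩
    _ ≤ _ := (card_union_le _ _).trans (Nat.add_le_add_left (card_biUnion_le.trans
        (sum_congr rfl fun i _ => card_product _ _).le) _)

end CrossPairs

section Partition

variable {α ι : Type*} [DecidableEq α] [Fintype ι] {W : ι → Finset α}

lemma sum_card_inter_of_existsUnique (hW : ∀ v, ∃! i, v ∈ W i) (A : Finset α) :
    ∑ i, (A ∩ W i).card = A.card := by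
  classical
  rw [← card_biUnion]
  · congr 1
    ext v
    simpa using fun hv => (hW v).exists
  · intro i _ j _ hij
    refine disjoint_left.mpr fun v hvi hvj => hij ?_
    exact (hW v).unique (mem_inter.mp hvi).2 (mem_inter.mp hvj).2

lemma sup_card_union_inter {S T : Finset α} (h : Disjoint S T) :
    univ.sup (fun i => ((S ∪ T) ∩ W i).card) =
      univ.sup (fun i => (S ∩ W i).card + (T ∩ W i).card) := by
  refine sup_congr rfl fun i _ => ?_
  rw [union_inter_distrib_right, card_union_of_disjoint]
  exact h.mono inter_subset_left inter_subset_left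

end Partition

section Greedy

variable {n : ℕ} {ι : Type*} [Fintype ι] {pos : Fin n → Fin n → Bool} {W : ι → Finset (Fin n)}

lemma card_crossPairs_le_two_mul [DecidableEq ι] (hsym : ∀ u v, pos u v = pos v u)
    (hW : ∀ v, ∃ i, v ∈ W i) (A : Finset (Fin n)) :
    (crossPairs pos W A A).card ≤ 2 * ((edgePairs n).filter fun p => pos p.1 p.2 = true ∧
      ∃ i j, i ≠ j ∧ p.1 ∈ A ∩ W i ∧ p.2 ∈ A ∩ W j).card := by
  set E := (edgePairs n).filter fun p => pos p.1 p.2 = true ∧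
    ∃ i j, i ≠ j ∧ p.1 ∈ A ∩ W i ∧ p.2 ∈ A ∩ W j
  have hsub : crossPairs pos W A A ⊆ E ∪ E.image Prod.swap := by
    rintro ⟨u, v⟩ hp
    simp only [crossPairs, mem_filter, mem_product] at hp
    obtain ⟨⟨hu, hv⟩, hpos, hdiff⟩ := hp
    obtain ⟨i, hi⟩ := hW u
    obtain ⟨j, hj⟩ := hW v
    have hij : i ≠ j := by rintro rfl; exact hdiff ⟨i, hi, hj⟩
    have huv : u ≠ v := by rintro rfl; exact hdiff ⟨i, hi, hi⟩
    rcases huv.lt_or_gt with h | h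
    · exact mem_union_left _ <| by
        simpa [E, edgePairs, h, hpos] using ⟨i, j, hij, ⟨hu, hi⟩, hv, hj⟩
    · refine mem_union_right _ (mem_image.mpr ⟨(v, u), ?_, rfl⟩)
      simpa [E, edgePairs, h, hsym v u, hpos] using ⟨j, i, hij.symm, ⟨hv, hj⟩, hu, hi⟩
  calc _ ≤ (E ∪ E.image Prod.swap).card := card_le_card hsub
    _ ≤ E.card + (E.image Prod.swap).card := card_union_le _ _
    _ ≤ 2 * E.card := by have := card_image_le (s := E) (f := Prod.swap); omega

lemma card_union_le_of_gain_pos (hsym : ∀ u v, pos u v = pos v u)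
    (hW : ∀ v, ∃! i, v ∈ W i) {S T : Finset (Fin n)} (hST : Disjoint S T)
    (hgain : 0 < gain pos S T)
    (hS : S.card ≤ univ.sup (fun i => (S ∩ W i).card) + (crossPairs pos W S S).card)
    (hT : T.card ≤ univ.sup (fun i => (T ∩ W i).card) + (crossPairs pos W T T).card) :
    (S ∪ T).card ≤
      univ.sup (fun i => ((S ∪ T) ∩ W i).card) + (crossPairs pos W (S ∪ T) (S ∪ T)).card := by
  have hcross : (crossPairs pos W (S ∪ T) (S ∪ T)).card = (crossPairs pos W S S).card +
      (crossPairs pos W T T).card + 2 * (crossPairs pos W S T).card := by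
    rw [card_crossPairs_union_left _ _ _ hST, card_crossPairs_union_right _ _ _ hST,
      card_crossPairs_union_right _ _ _ hST, card_crossPairs_comm W hsym T S]
    ring
  have hpairs : S.card * T.card < 2 * ((S ×ˢ T).filter fun p => pos p.1 p.2 = true).card := by
    unfold gain at hgain
    omega
  have hsup := sup_add_sup_le_of_sum_mul_sum_le (D := (crossPairs pos W S T).card)
    (s := fun i => (S ∩ W i).card) (t := fun i => (T ∩ W i).card) (by
      rw [sum_card_inter_of_existsUnique hW, sum_card_inter_of_existsUnique hW]
      have := card_filter_pos_le pos W S T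
      omega)
  rw [card_union_of_disjoint hST, sup_card_union_inter hST, hcross]
  omega

theorem GreedyBuilt.card_le_sup_add_card_crossPairs (hsym : ∀ u v, pos u v = pos v u)
    (hW : ∀ v, ∃! i, v ∈ W i) {C : Finset (Fin n)} (hC : GreedyBuilt pos C) :
    C.card ≤ univ.sup (fun i => (C ∩ W i).card) + (crossPairs pos W C C).card := by
  induction hC with
  | single v =>
    obtain ⟨i, hi, -⟩ := hW v
    have : ({v} : Finset (Fin n)) ∩ W i = {v} := inter_eq_left.mpr (singleton_subset_iff.mpr hi)
    exact le_add_right (le_sup_of_le (mem_univ i) (by rw [this]))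
  | merge S T _ _ hST hgain hS hT => exact card_union_le_of_gain_pos hsym hW hST hgain hS hT

end Greedy

/-- for a greedy-built cluster `C` and any clustering `W`,
`|C| ≤ maxᵢ |C ∩ Wᵢ| + 2·|Γ⁺(C∩W₁, …, C∩W_K)|`. -/
theorem greedy_cluster_bound {n : ℕ} {ι : Type*} [Fintype ι] [DecidableEq ι]
    (pos : Fin n → Fin n → Bool) (_hsym : ∀ u v, pos u v = pos v u)
    (W : ι → Finset (Fin n)) (hW : ∀ v : Fin n, ∃! i, v ∈ W i)
    (C : Finset (Fin n)) (hC : GreedyBuilt pos C) :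
    C.card ≤ (Finset.univ.sup fun i => (C ∩ W i).card) +
      2 * ((edgePairs n).filter
        (fun p => pos p.1 p.2 = true ∧
          ∃ i j, i ≠ j ∧ p.1 ∈ C ∩ W i ∧ p.2 ∈ C ∩ W j)).card :=
  (hC.card_le_sup_add_card_crossPairs _hsym hW).trans
    (Nat.add_le_add_left (card_crossPairs_le_two_mul _hsym (fun v => (hW v).exists) C) _)
end

section
/- Suppose an online algorithm for MaxAgree runs Greedy with probability 1 − p and an algorithm Dense with probability p, where Greedy guarantees profit ≥ (1/2)·OPT always, and Dense guarantees profit ≥ (1/2 + η)·OPT whenever OPT ≥ (1 − α/2)|E| (and possibly profit ≥ 0 otherwise). If OPT < (1−α/2)|E|, Greedy's guarantee profit ≥ |E|/2 yields ratio ≥ 1/(2−α). Then choosing p = α/(2 + 2η(2 − α)), the combined randomized algorithm has competitive ratio at least 1/2 + (αη/2)/(1 + 2η(1 − α/2)). -/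
/-!
Write `p = α / (2 + 2η(2 - α))`; the claimed ratio is exactly `1/2 + pη`. When `OPT` is large, Dense
gains `η·OPT` over the `OPT/2` of Greedy with probability `p`, which gives `1/2 + pη` directly. When
`OPT < (1 - α/2)|E|`, Greedy alone has ratio `1/(2 - α)`, and `p` is the probability at which
`(1 - p)/(2 - α) = 1/2 + pη`, so the two cases balance.
-/

lemma div_one_add_eq_div_two_add_mul (α η : ℝ) :
    (α * η / 2) / (1 + 2 * η * (1 - α / 2)) = α / (2 + 2 * η * (2 - α)) * η := by
  rw [div_mul_eq_mul_div, div_div]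
  congr 1
  ring

lemma one_sub_div_eq_two_sub_mul {α η : ℝ} (hK : 2 + 2 * η * (2 - α) ≠ 0) :
    1 - α / (2 + 2 * η * (2 - α)) = (2 - α) * (1 / 2 + α / (2 + 2 * η * (2 - α)) * η) := by
  linear_combination (-1 / 2 : ℝ) * div_mul_cancel₀ α hK

lemma le_two_sub_mul_of_le_one_sub_half_mul {α E OPT g : ℝ} (hα : α ≤ 2) (hg : E / 2 ≤ g)
    (h : OPT ≤ (1 - α / 2) * E) : OPT ≤ (2 - α) * g :=
  calc OPT ≤ (1 - α / 2) * E := h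
    _ = (2 - α) * (E / 2) := by ring
    _ ≤ (2 - α) * g := by gcongr

lemma half_add_mul_le_mix {p η OPT g d : ℝ} (hp0 : 0 ≤ p) (hp1 : p ≤ 1)
    (hg : OPT / 2 ≤ g) (hd : (1 / 2 + η) * OPT ≤ d) :
    (1 / 2 + p * η) * OPT ≤ (1 - p) * g + p * d := by
  have hq : 0 ≤ 1 - p := sub_nonneg.mpr hp1
  calc (1 / 2 + p * η) * OPT = (1 - p) * (OPT / 2) + p * ((1 / 2 + η) * OPT) := by ring
    _ ≤ (1 - p) * g + p * d := by gcongr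

lemma mul_le_mix_of_le_mul {p r c OPT g d : ℝ} (hp0 : 0 ≤ p) (hc : 0 ≤ c) (hd : 0 ≤ d)
    (hg : OPT ≤ r * g) (hpc : 1 - p = r * c) :
    c * OPT ≤ (1 - p) * g + p * d :=
  calc c * OPT ≤ c * (r * g) := by gcongr
    _ = (1 - p) * g := by rw [hpc]; ring
    _ ≤ (1 - p) * g + p * d := le_add_of_nonneg_right (mul_nonneg hp0 hd)

theorem combined_competitive_ratio_general
    (α η E OPT gProfit dProfit : ℝ)
    (hα0 : 0 < α) (hα1 : α < 1) (hη0 : 0 < η)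
    (hGreedyHalfE : E / 2 ≤ gProfit)
    (hGreedyHalfOPT : OPT / 2 ≤ gProfit)
    (hDense0 : 0 ≤ dProfit)
    (hDense : (1 - α / 2) * E ≤ OPT → (1 / 2 + η) * OPT ≤ dProfit) :
    (1 / 2 + (α * η / 2) / (1 + 2 * η * (1 - α / 2))) * OPT ≤
      (1 - α / (2 + 2 * η * (2 - α))) * gProfit +
        (α / (2 + 2 * η * (2 - α))) * dProfit := by
  have hK : 0 < 2 + 2 * η * (2 - α) := by nlinarith
  have hp0 : 0 ≤ α / (2 + 2 * η * (2 - α)) := by positivity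
  have hp1 : α / (2 + 2 * η * (2 - α)) ≤ 1 := by
    rw [div_le_one hK]
    nlinarith
  rw [div_one_add_eq_div_two_add_mul]
  rcases le_or_gt ((1 - α / 2) * E) OPT with hdense | hsparse
  · exact half_add_mul_le_mix hp0 hp1 hGreedyHalfOPT (hDense hdense)
  · exact mul_le_mix_of_le_mul hp0 (by positivity) hDense0
      (le_two_sub_mul_of_le_one_sub_half_mul (by linarith) hGreedyHalfE hsparse.le)
      (one_sub_div_eq_two_sub_mul hK.ne')

/-- combining Greedy (run with probability `1 − p`) with Dense
(probability `p`), with `p = α/(2 + 2η(2 − α))`, yields expected profit at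
least `(1/2 + (αη/2)/(1 + 2η(1 − α/2)))·OPT`. -/
theorem combined_competitive_ratio
    (α η E OPT gProfit dProfit : ℝ)
    (hα0 : 0 < α) (hα1 : α < 1) (hη0 : 0 < η) (hη1 : η < 1 / 2)
    (hE : 0 ≤ E) (hOPT0 : 0 ≤ OPT) (hOPTE : OPT ≤ E)
    (hGreedyHalfE : E / 2 ≤ gProfit)
    (hGreedyHalfOPT : OPT / 2 ≤ gProfit)
    (hDense0 : 0 ≤ dProfit)
    (hDense : (1 - α / 2) * E ≤ OPT → (1 / 2 + η) * OPT ≤ dProfit) :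
    (1 / 2 + (α * η / 2) / (1 + 2 * η * (1 - α / 2))) * OPT ≤
      (1 - α / (2 + 2 * η * (2 - α))) * gProfit +
        (α / (2 + 2 * η * (2 - α))) * dProfit :=
  combined_competitive_ratio_general α η E OPT gProfit dProfit hα0 hα1 hη0 hGreedyHalfE
    hGreedyHalfOPT hDense0 hDense
end
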